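/- arXiv:1608.02295 — 2 statements merged into one kernel-verified Lean document; each statement's English description precedes it below -/
import Mathlib

section
/- Let V ⊆ ℝ^l be an ℝ-linear subspace spanned by vectors with real algebraic coordinates, and suppose V is not contained in any proper subspace of ℝ^l defined over ℚ. Then there exists w ∈ V all of whose coordinates are real algebraic numbers that are linearly independent over ℚ. -/
/-!
Choose finitely many algebraic vectors `v₀, …, v_{k-1}` spanning `V`, let `F` be the number field
generated by their coordinates, and pick an algebraic `θ` of degree `> k` over `F` (a root of
`X ^ p - 2` for a large prime `p`). Then `w = ∑ θʲ vⱼ` works: if `q ⬝ᵥ w = 0` for a rational `q`,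
then `∑ θʲ (q ⬝ᵥ vⱼ) = 0` with coefficients in `F`, so every `q ⬝ᵥ vⱼ` vanishes. Thus `V` lies in
the hyperplane `q⊥`, which is defined over `ℚ` and hence proper unless `q = 0`.
-/

open Polynomial IntermediateField Module Submodule

lemma rat_pow_ne_two {p : ℕ} (hp : 1 < p) (b : ℚ) : b ^ p ≠ 2 := by
  intro hb
  have hb0 : b ≠ 0 := by rintro rfl; simp [zero_pow (by omega : p ≠ 0)] at hb
  have : Fact (Nat.Prime 2) := ⟨Nat.prime_two⟩
  have hval := congrArg (padicValRat 2) hb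
  have h2 : padicValRat 2 2 = 1 := by simpa using padicValRat.self (p := 2) one_lt_two
  rw [padicValRat.pow b, h2] at hval
  have := Int.eq_one_of_mul_eq_one_right (by positivity) hval
  omega

lemma exists_isIntegral_lt_natDegree_minpoly (n : ℕ) :
    ∃ θ : ℝ, IsIntegral ℚ θ ∧ n < (minpoly ℚ θ).natDegree := by
  obtain ⟨p, hnp, hp⟩ := Nat.exists_infinite_primes (n + 1)
  have hmonic : (X ^ p - C (2 : ℚ)).Monic := monic_X_pow_sub_C _ hp.ne_zero
  have hroot : aeval ((2 : ℝ) ^ (p⁻¹ : ℝ)) (X ^ p - C (2 : ℚ)) = 0 := by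
    simp [Real.rpow_inv_natCast_pow zero_le_two hp.ne_zero]
  have hmin := minpoly.eq_of_irreducible_of_monic
    (X_pow_sub_C_irreducible_of_prime hp (rat_pow_ne_two hp.one_lt)) hroot hmonic
  refine ⟨_, ⟨_, hmonic, hroot⟩, ?_⟩
  rw [← hmin, natDegree_X_pow_sub_C]
  omega

lemma natDegree_minpoly_le_finrank_mul {K L : Type*} [Field K] [Field L] [Algebra K L]
    (F : IntermediateField K L) [FiniteDimensional K F] {x : L} (hx : IsIntegral K x) :
    (minpoly K x).natDegree ≤ finrank K F * (minpoly F x).natDegree := by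
  have hxF : IsIntegral F x := hx.tower_top
  have := adjoin.finiteDimensional hxF
  have : FiniteDimensional K (F⟮x⟯.restrictScalars K) := FiniteDimensional.trans K F F⟮x⟯
  have : Module.Free F F⟮x⟯ := Module.Free.of_divisionRing _ _
  calc (minpoly K x).natDegree = finrank K K⟮x⟯ := (adjoin.finrank hx).symm
    _ ≤ finrank K (F⟮x⟯.restrictScalars K) := by
        refine finrank_le_of_le_right ?_
        rw [adjoin_simple_le_iff]
        exact mem_adjoin_simple_self F x
    _ = finrank K F * finrank F F⟮x⟯ := (finrank_mul_finrank K F F⟮x⟯).symm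
    _ = finrank K F * (minpoly F x).natDegree := by rw [adjoin.finrank hxF]

lemma exists_isIntegral_linearIndependent_pow (F : IntermediateField ℚ ℝ) [FiniteDimensional ℚ F]
    (k : ℕ) : ∃ θ : ℝ, IsIntegral ℚ θ ∧ LinearIndependent F (fun j : Fin k ↦ θ ^ (j : ℕ)) := by
  obtain ⟨θ, hθ, hdeg⟩ := exists_isIntegral_lt_natDegree_minpoly (finrank ℚ F * k)
  have hk : k < (minpoly F θ).natDegree := lt_of_mul_lt_mul_left
    (hdeg.trans_le (natDegree_minpoly_le_finrank_mul F hθ)) (Nat.zero_le _)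
  exact ⟨θ, hθ, (linearIndependent_pow (K := F) θ).comp _ (Fin.castLE_injective hk.le)⟩

lemma dotProduct_eq_zero_of_linearIndependent_pow {K L ι : Type*} [Field K] [Field L]
    [Algebra K L] [Fintype ι] {F : IntermediateField K L} {k : ℕ} {v : Fin k → ι → L}
    (hv : ∀ j i, v j i ∈ F) {θ : L} (hθ : LinearIndependent F (fun j : Fin k ↦ θ ^ (j : ℕ)))
    {u : ι → L} (hu : ∀ i, u i ∈ F) (h : u ⬝ᵥ ∑ j : Fin k, θ ^ (j : ℕ) • v j = 0) (j : Fin k) :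
    u ⬝ᵥ v j = 0 := by
  have hc : ∀ j, u ⬝ᵥ v j ∈ F := fun j => sum_mem fun i _ => mul_mem (hu i) (hv j i)
  have hrel : ∑ j, (⟨u ⬝ᵥ v j, hc j⟩ : F) • θ ^ (j : ℕ) = 0 := by
    change ∑ j, u ⬝ᵥ v j * θ ^ (j : ℕ) = 0
    simpa [dotProduct_sum, dotProduct_smul, mul_comm] using h
  exact congrArg Subtype.val (Fintype.linearIndependent_iff.1 hθ _ hrel j)

section RationalSubspace

variable {ι : Type*} [Fintype ι]

def ratSpan (t : Set (ι → ℚ)) : Submodule ℝ (ι → ℝ) :=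
  span ℝ ((fun f : ι → ℚ => fun i => (f i : ℝ)) '' t)

lemma ratCast_dotProduct (q f : ι → ℚ) :
    (fun i => (q i : ℝ)) ⬝ᵥ (fun i => (f i : ℝ)) = ((q ⬝ᵥ f : ℚ) : ℝ) :=
  (RingHom.map_dotProduct (Rat.castHom ℝ) q f).symm

lemma mem_ratSpan_of_dotProduct_eq_zero [DecidableEq ι] {q : ι → ℚ} {i₀ : ι} (hq : q i₀ ≠ 0)
    {x : ι → ℝ} (hx : (fun i => (q i : ℝ)) ⬝ᵥ x = 0) : x ∈ ratSpan {f | q ⬝ᵥ f = 0} := by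
  set u : ι → ι → ℚ := fun i => Pi.single i 1 - (q i / q i₀) • Pi.single i₀ 1
  have hu : ∀ i, u i ∈ {f | q ⬝ᵥ f = 0} := fun i => by
    simp [u, dotProduct_sub, hq]
  -- the `i₀`-coordinates of the `x i • u i` add up to `x i₀ - (q ⬝ᵥ x) / q i₀`
  have hx_eq : x = ∑ i, x i • fun m => (u i m : ℝ) := by
    funext m
    by_cases h : m = i₀
    · subst h
      simp only [dotProduct, mul_comm (q _ : ℝ)] at hx
      simp [u, Pi.single_apply, apply_ite (Rat.cast : ℚ → ℝ), mul_sub, Finset.sum_sub_distrib,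
        mul_div_assoc', ← Finset.sum_div, hx]
    · simp [u, Pi.single_apply, apply_ite (Rat.cast : ℚ → ℝ), h]
  rw [hx_eq]
  exact sum_mem fun i _ => smul_mem _ _ (subset_span ⟨u i, hu i, rfl⟩)

lemma dotProduct_eq_zero_of_mem_ratSpan {q : ι → ℚ} {x : ι → ℝ}
    (hx : x ∈ ratSpan {f | q ⬝ᵥ f = 0}) : (fun i => (q i : ℝ)) ⬝ᵥ x = 0 := by
  have : ratSpan {f | q ⬝ᵥ f = 0} ≤ LinearMap.ker (dotProductBilin ℝ ℝ (fun i => (q i : ℝ))) := by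
    rw [ratSpan, span_le]
    rintro _ ⟨f, hf, rfl⟩
    simp [ratCast_dotProduct, hf.out]
  exact this hx

lemma eq_zero_of_forall_dotProduct_eq_zero {s : Set (ι → ℝ)}
    (hs : ∀ t, span ℝ s ≤ ratSpan t → ratSpan t = ⊤) {q : ι → ℚ}
    (hq : ∀ x ∈ s, (fun i => (q i : ℝ)) ⬝ᵥ x = 0) : q = 0 := by
  classical
  by_contra hq0
  obtain ⟨i₀, hi₀⟩ := Function.ne_iff.1 hq0
  have htop := hs _ (span_le.2 fun x hx => mem_ratSpan_of_dotProduct_eq_zero hi₀ (hq x hx))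
  have hqq :=
    dotProduct_eq_zero_of_mem_ratSpan (htop ▸ Submodule.mem_top (x := fun i => (q i : ℝ)))
  rw [ratCast_dotProduct] at hqq
  exact hq0 (dotProduct_self_eq_zero.1 (by exact_mod_cast hqq))

end RationalSubspace

/-- If `V ⊆ ℝ^l` is spanned by vectors with real algebraic coordinates and is not contained
in any proper subspace defined over `ℚ`, then there is `w ∈ V` all of whose coordinates are
real algebraic numbers linearly independent over `ℚ`. -/
theorem stmt3 (l : ℕ) (V : Submodule ℝ (Fin l → ℝ))
    (hspan : ∃ s : Set (Fin l → ℝ), (∀ v ∈ s, ∀ i, IsAlgebraic ℚ (v i)) ∧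
      V = Submodule.span ℝ s)
    (hirr : ∀ W : Submodule ℝ (Fin l → ℝ),
      (∃ t : Set (Fin l → ℚ),
        W = Submodule.span ℝ ((fun f : Fin l → ℚ => fun i => ((f i : ℝ))) '' t)) →
      V ≤ W → W = ⊤) :
    ∃ w ∈ V, (∀ i, IsAlgebraic ℚ (w i)) ∧ LinearIndependent ℚ w := by
  obtain ⟨s, halg, rfl⟩ := hspan
  obtain ⟨v, hvs, hv_span, -⟩ := exists_fun_fin_finrank_span_eq ℝ s
  have hv_int : ∀ j i, IsIntegral ℚ (v j i) := fun j i => (halg _ (hvs j) i).isIntegral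
  set F := adjoin ℚ (Set.range fun p : _ × Fin l => v p.1 p.2)
  have hvF : ∀ j i, v j i ∈ F := fun j i => subset_adjoin _ _ ⟨(j, i), rfl⟩
  have : FiniteDimensional ℚ F := finiteDimensional_adjoin (by
    rintro _ ⟨⟨j, i⟩, rfl⟩
    exact hv_int j i)
  obtain ⟨θ, hθ, hθ_ind⟩ := exists_isIntegral_linearIndependent_pow F _
  refine ⟨∑ j : Fin _, θ ^ (j : ℕ) • v j, sum_mem fun j _ => smul_mem _ _ (subset_span (hvs j)),
    fun i => ?_, Fintype.linearIndependent_iff.2 fun q hq => ?_⟩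
  · rw [Finset.sum_apply]
    exact (IsIntegral.sum _ fun j _ => (hθ.pow _).mul (hv_int j i)).isAlgebraic
  · have hdot : (fun i => (q i : ℝ)) ⬝ᵥ ∑ j : Fin _, θ ^ (j : ℕ) • v j = 0 := by
      simpa only [dotProduct, Rat.smul_def] using hq
    refine congrFun (eq_zero_of_forall_dotProduct_eq_zero (s := Set.range v)
      (fun t h => hirr _ ⟨t, rfl⟩ (hv_span ▸ h)) ?_)
    rintro _ ⟨j, rfl⟩
    exact dotProduct_eq_zero_of_linearIndependent_pow hvF hθ_ind
      (fun i => SubfieldClass.ratCast_mem F (q i)) hdot j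
end

section
/- Let w = (w_1, ..., w_l) ∈ ℝ^l be a vector whose coordinates are real algebraic numbers that are linearly independent over ℚ. Then there exist constants c > 0 and L > 0 such that |⟨z, w⟩| ≥ c ‖z‖^{-L} for all nonzero z ∈ ℤ^l, i.e., w is (c, L)-Diophantine. -/
/-!
A Liouville-type norm argument. The coordinates of `w` span a number field `K ⊆ ℝ` of degree `d`,
and a fixed integer `D ≠ 0` makes every `D w_i` an algebraic integer. For `z ≠ 0`, linear
independence makes `D ⟨z, w⟩` a nonzero algebraic integer of `K`, so its field norm is a nonzero
integer. That norm is the product of the `d` conjugates of `D ⟨z, w⟩`; each of them is `O(‖z‖)`,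
and one of them is `D ⟨z, w⟩` itself, hence `|⟨z, w⟩| ≫ ‖z‖^{-(d-1)}`.
-/

open Finset

section Embeddings

variable {K : Type*} [Field K] [Algebra ℚ K] [FiniteDimensional ℚ K]

theorem one_le_prod_norm_embeddings_of_isIntegral {x : K} (hx : IsIntegral ℤ x) (hx0 : x ≠ 0) :
    1 ≤ ∏ σ : K →ₐ[ℚ] ℂ, ‖σ x‖ := by
  obtain ⟨n, hn⟩ := IsIntegrallyClosed.isIntegral_iff.mp (Algebra.isIntegral_norm ℚ hx)
  have hn0 : n ≠ 0 := by
    rintro rfl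
    exact Algebra.norm_ne_zero_iff.mpr hx0 (by rw [← hn, map_zero])
  rw [← norm_prod, ← Algebra.norm_eq_prod_embeddings, ← hn, eq_ratCast, eq_intCast, Rat.cast_intCast, Complex.norm_intCast]
  exact_mod_cast Int.one_le_abs hn0

theorem one_le_norm_embedding_mul_pow_of_isIntegral {x : K} (hx : IsIntegral ℤ x) (hx0 : x ≠ 0)
    (σ₀ : K →ₐ[ℚ] ℂ) {B : ℝ} (hB : ∀ σ : K →ₐ[ℚ] ℂ, ‖σ x‖ ≤ B) :
    1 ≤ ‖σ₀ x‖ * B ^ (Fintype.card (K →ₐ[ℚ] ℂ) - 1) := by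
  classical
  have hrest : ∏ σ ∈ univ.erase σ₀, ‖σ x‖ ≤ B ^ (Fintype.card (K →ₐ[ℚ] ℂ) - 1) := by
    simpa [card_erase_of_mem] using
      prod_le_prod (fun σ _ => norm_nonneg (σ x)) (fun σ (_ : σ ∈ univ.erase σ₀) => hB σ)
  calc 1 ≤ ∏ σ : K →ₐ[ℚ] ℂ, ‖σ x‖ := one_le_prod_norm_embeddings_of_isIntegral hx hx0
    _ = ‖σ₀ x‖ * ∏ σ ∈ univ.erase σ₀, ‖σ x‖ := (mul_prod_erase _ _ (mem_univ σ₀)).symm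
    _ ≤ _ := mul_le_mul_of_nonneg_left hrest (norm_nonneg _)

end Embeddings

theorem norm_sum_zsmul_le {ι E : Type*} [Fintype ι] [SeminormedAddCommGroup E]
    (z : ι → ℤ) (v : ι → E) : ‖∑ i, z i • v i‖ ≤ ‖z‖ * ∑ i, ‖v i‖ := by
  rw [mul_sum]
  refine (norm_sum_le _ _).trans (sum_le_sum fun i _ => ?_)
  exact (norm_zsmul_le _ _).trans
    (mul_le_mul_of_nonneg_right (norm_le_pi_norm z i) (norm_nonneg _))

theorem Int.one_le_norm_pi_of_ne_zero {ι : Type*} [Fintype ι] {z : ι → ℤ} (hz : z ≠ 0) :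
    1 ≤ ‖z‖ := by
  obtain ⟨i, hi⟩ := Function.ne_iff.mp hz
  calc (1 : ℝ) ≤ ‖z i‖ := by rw [Int.norm_eq_abs]; exact_mod_cast Int.one_le_abs hi
    _ ≤ ‖z‖ := norm_le_pi_norm z i

theorem exists_pos_le_norm_embedding_sum_zsmul_mul_pow {K ι : Type*} [Field K] [Algebra ℚ K]
    [FiniteDimensional ℚ K] [Fintype ι] {a : ι → K} (ha : LinearIndependent ℚ a)
    (σ₀ : K →ₐ[ℚ] ℂ) :
    ∃ c > (0 : ℝ), ∃ n : ℕ, ∀ z : ι → ℤ, z ≠ 0 → c ≤ ‖σ₀ (∑ i, z i • a i)‖ * ‖z‖ ^ n := by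
  classical
  have := algebraRat.charZero K
  obtain ⟨D, hD0, hDa⟩ := exists_integral_multiples ℤ ℚ (univ.image a)
  set M : ℝ := 1 + ∑ σ : K →ₐ[ℚ] ℂ, ∑ i, ‖σ (D • a i)‖
  have hM : ∀ σ : K →ₐ[ℚ] ℂ, ∑ i, ‖σ (D • a i)‖ ≤ M := fun σ => by
    have := single_le_sum (f := fun τ : K →ₐ[ℚ] ℂ => ∑ i, ‖τ (D • a i)‖)
      (fun τ _ => sum_nonneg fun i _ => norm_nonneg _) (mem_univ σ)
    linarith
  set n := Fintype.card (K →ₐ[ℚ] ℂ) - 1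
  refine ⟨(|(D : ℝ)| * M ^ n)⁻¹, by positivity, n, fun z hz => ?_⟩
  set α := ∑ i, z i • a i
  have hα0 : α ≠ 0 := fun h =>
    hz (funext (Fintype.linearIndependent_iff.mp (ha.restrict_scalars' ℤ) z h))
  have hDα : D • α = ∑ i, z i • D • a i := by
    simp only [α, smul_sum, smul_comm D]
  have hint : IsIntegral ℤ (D • α) := hDα ▸
    IsIntegral.sum _ fun i _ => (hDa _ (mem_image_of_mem a (mem_univ i))).zsmul _
  have hbound : ∀ σ : K →ₐ[ℚ] ℂ, ‖σ (D • α)‖ ≤ ‖z‖ * M := fun σ => by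
    have hσ : σ (D • α) = ∑ i, z i • σ (D • a i) := by
      rw [hDα, map_sum]
      exact sum_congr rfl fun i _ => map_zsmul σ (z i) _
    rw [hσ]
    exact (norm_sum_zsmul_le z _).trans
      (mul_le_mul_of_nonneg_left (hM σ) (norm_nonneg _))
  have key := one_le_norm_embedding_mul_pow_of_isIntegral hint (smul_ne_zero hD0 hα0) σ₀ hbound
  rw [map_zsmul, zsmul_eq_mul, norm_mul, Complex.norm_intCast, mul_pow] at key
  rw [inv_le_iff_one_le_mul₀ (by positivity)]
  linarith

/-- A vector `w ∈ ℝ^l` with real algebraic coordinates linearly independent over `ℚ`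
is `(c, L)`-Diophantine: `|⟨z, w⟩| ≥ c ‖z‖^{-L}` for all nonzero `z ∈ ℤ^l`. -/
theorem stmt4 (l : ℕ) (w : Fin l → ℝ) (halg : ∀ i, IsAlgebraic ℚ (w i))
    (hli : LinearIndependent ℚ w) :
    ∃ c > (0 : ℝ), ∃ L > (0 : ℝ), ∀ z : Fin l → ℤ, z ≠ 0 →
      c * ‖z‖ ^ (-L) ≤ |∑ i, (z i : ℝ) * w i| := by
  let K := IntermediateField.adjoin ℚ (Set.range w)
  have : FiniteDimensional ℚ K := IntermediateField.finiteDimensional_adjoin <| by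
    rintro _ ⟨i, rfl⟩
    exact (halg i).isIntegral
  let a (i : Fin l) : K := ⟨w i, IntermediateField.subset_adjoin ℚ _ ⟨i, rfl⟩⟩
  let σ₀ := (Complex.ofRealAm.restrictScalars ℚ).comp K.val
  obtain ⟨c, hc, n, hcn⟩ := exists_pos_le_norm_embedding_sum_zsmul_mul_pow
    (LinearIndependent.of_comp K.val.toLinearMap (v := a) hli) σ₀
  refine ⟨c, hc, n + 1, by positivity, fun z hz => ?_⟩
  have hz1 := Int.one_le_norm_pi_of_ne_zero hz
  have hσ₀ : ‖σ₀ (∑ i, z i • a i)‖ = |∑ i, (z i : ℝ) * w i| := by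
    rw [← Real.norm_eq_abs, ← Complex.norm_real, map_sum, Complex.ofReal_sum]
    refine congrArg norm (sum_congr rfl fun i _ => ?_)
    rw [map_zsmul, zsmul_eq_mul]
    push_cast
    rfl
  have hpow : ‖z‖ ^ (-((n : ℝ) + 1)) ≤ (‖z‖ ^ n)⁻¹ := by
    rw [← Real.rpow_natCast, ← Real.rpow_neg (by positivity)]
    exact Real.rpow_le_rpow_of_exponent_le hz1 (by linarith)
  calc c * ‖z‖ ^ (-((n : ℝ) + 1)) ≤ c * (‖z‖ ^ n)⁻¹ := by gcongr
    _ ≤ |∑ i, (z i : ℝ) * w i| := by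
      rw [← div_eq_mul_inv, div_le_iff₀ (by positivity), ← hσ₀]
      exact hcn z hz
end
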